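/- For every μ with 2/e < μ ≤ 2, there exists a measurable function W : ℝ × ℝ → ℝ satisfying the minimal constraints, with purity equal to μ, and with Wigner entropy S[W] < 1 + ln π. Consequently, under the minimal constraints alone, no purity threshold μ_⋆ > 2/e can make the implication 'μ ≤ μ_⋆ ⇒ S[W] ≥ 1 + ln π' valid. -/

import Mathlib

/-!
The flat-top density of height `μ / (2π)` on a set of area `2π / μ` has purity `μ` and entropy
`log (2π / μ)`, which lies below `1 + log π` exactly when `μ > 2 / e`; the cap `π W ≤ 1` is the
condition `μ ≤ 2`. Taking `μ = min μ⋆ 2` refutes any threshold `μ⋆ > 2 / e`.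
-/

open Real MeasureTheory

section UniformDensity

variable {α : Type*} [MeasurableSpace α] (μ : Measure α) (s : Set α)

noncomputable def uniformDensity : α → ℝ :=
  s.indicator fun _ => (μ.real s)⁻¹

variable {μ s}

lemma measurable_uniformDensity (hs : MeasurableSet s) : Measurable (uniformDensity μ s) :=
  measurable_const.indicator hs

lemma uniformDensity_nonneg (x : α) : 0 ≤ uniformDensity μ s x :=
  Set.indicator_nonneg (fun _ _ => inv_nonneg.2 measureReal_nonneg) x

lemma uniformDensity_le (x : α) : uniformDensity μ s x ≤ (μ.real s)⁻¹ :=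
  Set.indicator_le_self' (fun _ _ => inv_nonneg.2 measureReal_nonneg) x

lemma integral_comp_uniformDensity {f : ℝ → ℝ} (hf : f 0 = 0) (hs : MeasurableSet s) :
    ∫ x, f (uniformDensity μ s x) ∂μ = μ.real s * f (μ.real s)⁻¹ := by
  have hcomp : (fun x => f (uniformDensity μ s x)) = s.indicator fun _ => f (μ.real s)⁻¹ :=
    (Set.indicator_comp_of_zero (f := fun _ => (μ.real s)⁻¹) hf).symm
  rw [hcomp, integral_indicator_const _ hs, smul_eq_mul]

lemma integral_uniformDensity (hs : MeasurableSet s) (hpos : 0 < μ.real s) :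
    ∫ x, uniformDensity μ s x ∂μ = 1 := by
  simpa [hpos.ne'] using integral_comp_uniformDensity (μ := μ) (f := id) rfl hs

lemma integral_uniformDensity_sq (hs : MeasurableSet s) :
    ∫ x, uniformDensity μ s x ^ 2 ∂μ = (μ.real s)⁻¹ := by
  rw [integral_comp_uniformDensity (f := (· ^ 2)) (zero_pow two_ne_zero) hs]
  rcases eq_or_ne (μ.real s) 0 with h | h
  · simp [h]
  · field_simp

lemma integral_uniformDensity_mul_log (hs : MeasurableSet s) :
    ∫ x, uniformDensity μ s x * log (uniformDensity μ s x) ∂μ = -log (μ.real s) := by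
  rw [integral_comp_uniformDensity (f := fun w => w * log w) (zero_mul _) hs, log_inv,
    ← mul_assoc]
  rcases eq_or_ne (μ.real s) 0 with h | h
  · simp [h]
  · rw [mul_inv_cancel₀ h, one_mul]

end UniformDensity

lemma exists_measurableSet_volume_real_eq {a : ℝ} (ha : 0 ≤ a) :
    ∃ s : Set (ℝ × ℝ), MeasurableSet s ∧ volume.real s = a :=
  ⟨Set.Icc 0 1 ×ˢ Set.Icc 0 a, measurableSet_Icc.prod measurableSet_Icc, by
    rw [Measure.volume_eq_prod, measureReal_prod_prod, Real.volume_real_Icc_of_le zero_le_one,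
      Real.volume_real_Icc_of_le ha]
    ring⟩

theorem exists_flatTop_of_purity {μ : ℝ} (hμ : 0 < μ) (hμ2 : μ ≤ 2) :
    ∃ W : ℝ × ℝ → ℝ, Measurable W
      ∧ (∀ z, 0 ≤ W z)
      ∧ (∫ z, W z = 1)
      ∧ (∀ z, π * W z ≤ 1)
      ∧ 2 * π * (∫ z, (W z) ^ 2) = μ
      ∧ (-∫ z, W z * log (W z)) = log (2 * π / μ) := by
  obtain ⟨s, hs, harea⟩ := exists_measurableSet_volume_real_eq (a := 2 * π / μ) (by positivity)
  have hpos : 0 < volume.real s := harea ▸ by positivity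
  refine ⟨uniformDensity volume s, measurable_uniformDensity hs, uniformDensity_nonneg,
    integral_uniformDensity hs hpos, fun z => ?_, ?_, ?_⟩
  · calc π * uniformDensity volume s z ≤ π * (volume.real s)⁻¹ :=
          mul_le_mul_of_nonneg_left (uniformDensity_le z) pi_pos.le
      _ = μ / 2 := by rw [harea]; field_simp
      _ ≤ 1 := by linarith
  · rw [integral_uniformDensity_sq hs, harea]
    field_simp
  · rw [integral_uniformDensity_mul_log hs, harea, neg_neg]

lemma log_two_pi_div_lt_one_add_log_pi {μ : ℝ} (hμ : 2 / exp 1 < μ) :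
    log (2 * π / μ) < 1 + log π := by
  have hμpos : 0 < μ := lt_trans (by positivity) hμ
  have hlogμ : log 2 - 1 < log μ := by
    simpa [log_div, log_exp] using log_lt_log (by positivity) hμ
  rw [log_div (by positivity) hμpos.ne', log_mul two_ne_zero pi_pos.ne']
  linarith

theorem purity_threshold_sharpness :
    (∀ μ : ℝ, 2 / Real.exp 1 < μ → μ ≤ 2 →
      ∃ W : ℝ × ℝ → ℝ, Measurable W
        ∧ (∀ z, 0 ≤ W z)
        ∧ (∫ z, W z = 1)
        ∧ (∀ z, Real.pi * W z ≤ 1)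
        ∧ 2 * Real.pi * (∫ z, (W z) ^ 2) = μ
        ∧ (-∫ z, W z * Real.log (W z)) < 1 + Real.log Real.pi)
    ∧ ∀ μstar : ℝ, 2 / Real.exp 1 < μstar →
        ¬ (∀ W : ℝ × ℝ → ℝ, Measurable W →
            (∀ z, 0 ≤ W z) →
            (∫ z, W z = 1) →
            (∀ z, Real.pi * W z ≤ 1) →
            2 * Real.pi * (∫ z, (W z) ^ 2) ≤ μstar →
            1 + Real.log Real.pi ≤ -∫ z, W z * Real.log (W z)) := by
  have witness : ∀ μ : ℝ, 2 / exp 1 < μ → μ ≤ 2 → ∃ W : ℝ × ℝ → ℝ, Measurable W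
      ∧ (∀ z, 0 ≤ W z) ∧ (∫ z, W z = 1) ∧ (∀ z, π * W z ≤ 1)
      ∧ 2 * π * (∫ z, (W z) ^ 2) = μ ∧ (-∫ z, W z * log (W z)) < 1 + log π := by
    intro μ hμ hμ2
    obtain ⟨W, hW, hnonneg, hmass, hbound, hpurity, hentropy⟩ :=
      exists_flatTop_of_purity (lt_trans (by positivity) hμ) hμ2
    exact ⟨W, hW, hnonneg, hmass, hbound, hpurity, hentropy ▸ log_two_pi_div_lt_one_add_log_pi hμ⟩
  refine ⟨witness, fun μstar hμstar hthreshold => ?_⟩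
  have h2e : 2 / exp 1 < 2 := div_lt_self two_pos (one_lt_exp_iff.2 one_pos)
  obtain ⟨W, hW, hnonneg, hmass, hbound, hpurity, hentropy⟩ :=
    witness (min μstar 2) (lt_min hμstar h2e) (min_le_right _ _)
  exact (hthreshold W hW hnonneg hmass hbound (hpurity.trans_le (min_le_left _ _))).not_gt hentropy
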